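/- Let w ∈ ℂ with w ∉ Λ. Then t ↦ σ_w(t, τ) is holomorphic on ℂ ∖ Λ, and at each lattice point λ = lτ + m (l, m ∈ ℤ) it has a simple pole with residue e^{2πi w l}; that is, the limit of (t − λ)·σ_w(t, τ) as t → λ exists and equals e^{2πi w l}. In particular the residue of σ_w(t,τ) at t = 0 equals 1. -/

import Mathlib

open Complex Filter
open scoped Topology

noncomputable section

/-- The lattice `Λ = ℤτ + ℤ ⊂ ℂ` as a set. -/
def Lam (τ : ℂ) : Set ℂ := {c | ∃ l m : ℤ, c = l * τ + m}

/-- The infinite product `(y;q) = ∏_{j=0}^∞ (1 - y qʲ)`. -/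
def qPoch (y q : ℂ) : ℂ := ∏' j : ℕ, (1 - y * q ^ j)

/-- The first Jacobi theta function
`θ(z,τ) = i e^{πi(τ/4 - z)} (x;q)(q/x;q)(q;q)`, `q = e^{2πiτ}`, `x = e^{2πiz}`. -/
def theta (z τ : ℂ) : ℂ :=
  Complex.I * Complex.exp ((Real.pi : ℂ) * Complex.I * (τ / 4 - z)) *
    qPoch (Complex.exp (2 * (Real.pi : ℂ) * Complex.I * z))
      (Complex.exp (2 * (Real.pi : ℂ) * Complex.I * τ)) *
    qPoch (Complex.exp (2 * (Real.pi : ℂ) * Complex.I * τ) /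
        Complex.exp (2 * (Real.pi : ℂ) * Complex.I * z))
      (Complex.exp (2 * (Real.pi : ℂ) * Complex.I * τ)) *
    qPoch (Complex.exp (2 * (Real.pi : ℂ) * Complex.I * τ))
      (Complex.exp (2 * (Real.pi : ℂ) * Complex.I * τ))

/-- `θ'(z,τ)`, the derivative of `θ` in the `z` variable. -/
def thetaD (z τ : ℂ) : ℂ := deriv (fun u => theta u τ) z

/-- `σ_w(t,τ) = θ(w-t,τ)θ'(0,τ)/(θ(w,τ)θ(t,τ))`. -/
def sigmaW (w t τ : ℂ) : ℂ := theta (w - t) τ * thetaD 0 τ / (theta w τ * theta t τ)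

/-!
The quasi-periodicity `θ(z + lτ + m) = (-1)^{l+m} e^{-πil²τ - 2πilz} θ(z)` gives
`σ_w(t + lτ + m) = e^{2πiwl} σ_w(t)`, so every residue is `e^{2πiwl}` times the one at `0`.
At `0`, splitting off the factor `1 - e^{2πiz}` of `(x;q)` leaves a function that does not vanish
there, so `θ` has a simple zero, `θ'(0) ≠ 0`, and `t σ_w(t) → θ(w)θ'(0)/(θ(w)θ'(0)) = 1`.
Holomorphy off `Λ` holds because the products converge locally uniformly and none of their
factors vanishes off `Λ`.
-/

open scoped Real

section QPochhammer

variable {q : ℂ}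

lemma summable_norm_mul_pow (hq : ‖q‖ < 1) (y : ℂ) : Summable fun j : ℕ => ‖y * q ^ j‖ := by
  simpa [norm_mul, norm_pow] using
    (summable_geometric_of_lt_one (norm_nonneg q) hq).mul_left ‖y‖

lemma multipliable_one_sub_mul_pow (hq : ‖q‖ < 1) (y : ℂ) :
    Multipliable fun j : ℕ => 1 - y * q ^ j := by
  simpa [sub_eq_add_neg] using
    multipliable_one_add_of_summable (f := fun j : ℕ => -(y * q ^ j))
      (by simpa using summable_norm_mul_pow hq y)

lemma qPoch_eq_one_sub_mul (hq : ‖q‖ < 1) (y : ℂ) : qPoch y q = (1 - y) * qPoch (y * q) q := by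
  have hshift : Multipliable fun j : ℕ => 1 - y * q ^ (j + 1) := by
    refine (multipliable_one_sub_mul_pow hq (y * q)).congr fun j => ?_
    ring
  unfold qPoch
  rw [tprod_eq_zero_mul' (f := fun j : ℕ => 1 - y * q ^ j) hshift, pow_zero, mul_one]
  congr 1
  exact tprod_congr fun j => by ring

lemma qPoch_ne_zero (hq : ‖q‖ < 1) {y : ℂ} (hy : ∀ j : ℕ, y * q ^ j ≠ 1) : qPoch y q ≠ 0 := by
  simpa [qPoch, sub_eq_add_neg] using
    tprod_one_add_ne_zero_of_summable (f := fun j : ℕ => -(y * q ^ j))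
      (fun j => by rw [← sub_eq_add_neg, sub_ne_zero]; exact (hy j).symm)
      (by simpa using summable_norm_mul_pow hq y)

lemma qPoch_ne_zero_of_norm_lt_one (hq : ‖q‖ < 1) {y : ℂ} (hy : ‖y‖ < 1) : qPoch y q ≠ 0 :=
  qPoch_ne_zero hq fun j h => by
    have : ‖y * q ^ j‖ < 1 := by
      rw [norm_mul, norm_pow]
      exact mul_lt_one_of_nonneg_of_lt_one_left (norm_nonneg y) hy
        (pow_le_one₀ (norm_nonneg q) hq.le)
    simp [h] at this

lemma differentiableOn_qPoch_ball (hq : ‖q‖ < 1) (R : ℝ) :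
    DifferentiableOn ℂ (fun y => qPoch y q) (Metric.ball 0 R) := by
  have hprod : HasProdLocallyUniformlyOn (fun j y => 1 + -(y * q ^ j))
      (fun y => ∏' j, (1 + -(y * q ^ j))) (Metric.ball 0 R) := by
    refine ((summable_geometric_of_lt_one (norm_nonneg q) hq).mul_left R
      ).hasProdLocallyUniformlyOn_nat_one_add Metric.isOpen_ball
      (.of_forall fun j y hy => ?_) fun j => by fun_prop
    rw [norm_neg, norm_mul, norm_pow]
    gcongr
    simpa using (Metric.mem_ball.1 hy).le
  simpa [qPoch, sub_eq_add_neg] using hprod.differentiableOn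
    (.of_forall fun s => by simpa [Finset.prod_fn] using
      DifferentiableOn.finsetProd fun j _ => by fun_prop) Metric.isOpen_ball

lemma differentiable_qPoch (hq : ‖q‖ < 1) : Differentiable ℂ fun y => qPoch y q := fun y =>
  (differentiableOn_qPoch_ball hq (‖y‖ + 1)).differentiableAt
    (Metric.isOpen_ball.mem_nhds (by simp))

end QPochhammer

section Theta

variable {τ : ℂ}

lemma norm_exp_two_pi_I_mul_lt_one (hτ : 0 < τ.im) : ‖cexp (2 * π * I * τ)‖ < 1 :=
  UpperHalfPlane.norm_exp_two_pi_I_lt_one ⟨τ, hτ⟩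

lemma differentiable_theta (hτ : 0 < τ.im) : Differentiable ℂ fun z => theta z τ := by
  have hq := differentiable_qPoch (norm_exp_two_pi_I_mul_lt_one hτ)
  unfold theta
  fun_prop (disch := exact fun _ => Complex.exp_ne_zero _)

lemma exists_int_eq_of_exp_two_pi_I_mul_eq_one {a : ℂ} (h : cexp (2 * π * I * a) = 1) :
    ∃ n : ℤ, a = n := by
  obtain ⟨n, hn⟩ := Complex.exp_eq_one_iff.1 h
  refine ⟨n, mul_left_cancel₀ Complex.two_pi_I_ne_zero ?_⟩
  rw [hn]
  ring

lemma theta_ne_zero (hτ : 0 < τ.im) {z : ℂ} (hz : z ∉ Lam τ) : theta z τ ≠ 0 := by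
  have hq := norm_exp_two_pi_I_mul_lt_one hτ
  have hpow : ∀ (a : ℂ) (j : ℕ), cexp (2 * π * I * a) ^ j = cexp (2 * π * I * (j * a)) :=
    fun a j => by
    rw [← Complex.exp_nat_mul]; ring_nf
  unfold theta
  refine mul_ne_zero (mul_ne_zero (mul_ne_zero (mul_ne_zero I_ne_zero
    (Complex.exp_ne_zero _)) (qPoch_ne_zero hq fun j h => hz ?_))
    (qPoch_ne_zero hq fun j h => hz ?_)) (qPoch_ne_zero_of_norm_lt_one hq hq)
  · rw [hpow, ← Complex.exp_add, ← mul_add] at h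
    obtain ⟨n, hn⟩ := exists_int_eq_of_exp_two_pi_I_mul_eq_one h
    exact ⟨-j, n, by push_cast; linear_combination hn⟩
  · rw [hpow, ← Complex.exp_sub, ← Complex.exp_add, ← mul_sub, ← mul_add] at h
    obtain ⟨n, hn⟩ := exists_int_eq_of_exp_two_pi_I_mul_eq_one h
    exact ⟨j + 1, -n, by push_cast; linear_combination -hn⟩

def thetaCofactor (z τ : ℂ) : ℂ :=
  I * cexp (π * I * (τ / 4 - z)) *
    qPoch (cexp (2 * π * I * z) * cexp (2 * π * I * τ)) (cexp (2 * π * I * τ)) *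
    qPoch (cexp (2 * π * I * τ) / cexp (2 * π * I * z)) (cexp (2 * π * I * τ)) *
    qPoch (cexp (2 * π * I * τ)) (cexp (2 * π * I * τ))

lemma theta_eq_mul_thetaCofactor (hτ : 0 < τ.im) (z : ℂ) :
    theta z τ = (1 - cexp (2 * π * I * z)) * thetaCofactor z τ := by
  unfold theta thetaCofactor
  rw [qPoch_eq_one_sub_mul (norm_exp_two_pi_I_mul_lt_one hτ)]
  ring

lemma differentiable_thetaCofactor (hτ : 0 < τ.im) :
    Differentiable ℂ fun z => thetaCofactor z τ := by
  have hq := differentiable_qPoch (norm_exp_two_pi_I_mul_lt_one hτ)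
  unfold thetaCofactor
  fun_prop (disch := exact fun _ => Complex.exp_ne_zero _)

lemma thetaCofactor_zero_ne_zero (hτ : 0 < τ.im) : thetaCofactor 0 τ ≠ 0 := by
  have hq := norm_exp_two_pi_I_mul_lt_one hτ
  have hqq := qPoch_ne_zero_of_norm_lt_one hq hq
  unfold thetaCofactor
  simp only [mul_zero, Complex.exp_zero, one_mul, div_one, sub_zero]
  exact mul_ne_zero (mul_ne_zero (mul_ne_zero (mul_ne_zero I_ne_zero
    (Complex.exp_ne_zero _)) hqq) hqq) hqq

lemma hasDerivAt_theta_zero (hτ : 0 < τ.im) :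
    HasDerivAt (fun z => theta z τ) (-(2 * π * I) * thetaCofactor 0 τ) 0 := by
  have hfactor : HasDerivAt (fun z : ℂ => 1 - cexp (2 * π * I * z)) (-(2 * π * I)) 0 := by
    simpa using (((hasDerivAt_id (0 : ℂ)).const_mul (2 * π * I)).cexp).const_sub 1
  have := hfactor.mul ((differentiable_thetaCofactor hτ) 0).hasDerivAt
  simp only [mul_zero, Complex.exp_zero, sub_self, zero_mul, add_zero] at this
  exact this.congr_of_eventuallyEq (.of_forall (theta_eq_mul_thetaCofactor hτ))

lemma thetaD_zero_ne_zero (hτ : 0 < τ.im) : thetaD 0 τ ≠ 0 := by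
  rw [thetaD, (hasDerivAt_theta_zero hτ).deriv]
  exact mul_ne_zero (neg_ne_zero.2 Complex.two_pi_I_ne_zero) (thetaCofactor_zero_ne_zero hτ)

lemma tendsto_div_theta_zero (hτ : 0 < τ.im) :
    Tendsto (fun u => u / theta u τ) (𝓝[≠] 0) (𝓝 (thetaD 0 τ)⁻¹) := by
  have hderiv : HasDerivAt (fun z => theta z τ) (thetaD 0 τ) 0 :=
    ((differentiable_theta hτ) 0).hasDerivAt
  have hθ0 : theta 0 τ = 0 := by simp [theta_eq_mul_thetaCofactor hτ]
  have hslope := (hasDerivAt_iff_tendsto_slope.1 hderiv).inv₀ (thetaD_zero_ne_zero hτ)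
  refine hslope.congr fun u => ?_
  simp [slope_def_field, hθ0]

end Theta

section QuasiPeriodicity

lemma apply_add_int_mul_of_apply_add {f : ℂ → ℂ} {a α β : ℂ}
    (h : ∀ z, f (z + a) = cexp (α + β * z) * f z) (n : ℤ) (z : ℂ) :
    f (z + n * a) = cexp (n * α + n * (n - 1) / 2 * β * a + n * β * z) * f z := by
  induction n using Int.induction_on with
  | zero => simp
  | succ n ih =>
    push_cast at ih ⊢
    rw [show z + (n + 1) * a = z + n * a + a by ring, h, ih, ← mul_assoc, ← Complex.exp_add]
    congr 2
    ring
  | pred n ih =>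
    have hstep := h (z + ((-n - 1 : ℤ) : ℂ) * a)
    rw [show z + ((-n - 1 : ℤ) : ℂ) * a + a = z + ((-n : ℤ) : ℂ) * a by push_cast; ring, ih]
      at hstep
    rw [← mul_right_inj' (Complex.exp_ne_zero (α + β * (z + ((-n - 1 : ℤ) : ℂ) * a))), ← hstep,
      ← mul_assoc, ← Complex.exp_add]
    congr 2
    push_cast
    ring

variable {τ : ℂ}

lemma theta_add_one (z : ℂ) : theta (z + 1) τ = -theta z τ := by
  have hx : cexp (2 * π * I * (z + 1)) = cexp (2 * π * I * z) := by
    rw [mul_add, mul_one, Complex.exp_add, Complex.exp_two_pi_mul_I, mul_one]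
  have hprefactor : cexp (π * I * (τ / 4 - (z + 1))) = -cexp (π * I * (τ / 4 - z)) := by
    rw [show π * I * (τ / 4 - (z + 1)) = π * I * (τ / 4 - z) - π * I by ring, Complex.exp_sub,
      Complex.exp_pi_mul_I, div_neg, div_one]
  unfold theta
  rw [hx, hprefactor]
  ring

lemma theta_add_tau (hτ : 0 < τ.im) (z : ℂ) :
    theta (z + τ) τ = cexp (π * I * (1 - τ) + (-(2 * π * I)) * z) * theta z τ := by
  have hq := norm_exp_two_pi_I_mul_lt_one hτ
  unfold theta
  set x := cexp (2 * π * I * z)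
  set q := cexp (2 * π * I * τ)
  have hx : x ≠ 0 := Complex.exp_ne_zero _
  have hq0 : q ≠ 0 := Complex.exp_ne_zero _
  have hxq : cexp (2 * π * I * (z + τ)) = x * q := by
    rw [mul_add, Complex.exp_add]
  have hprefactor :
      cexp (π * I * (τ / 4 - (z + τ))) = cexp (-(π * I * τ)) * cexp (π * I * (τ / 4 - z)) := by
    rw [← Complex.exp_add]
    ring_nf
  have hmultiplier :
      cexp (π * I * (1 - τ) + (-(2 * π * I)) * z) = -(cexp (-(π * I * τ)) * x⁻¹) := by
    rw [show π * I * (1 - τ) + (-(2 * π * I)) * z = π * I + -(π * I * τ) + -(2 * π * I * z) by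
      ring,
      Complex.exp_add, Complex.exp_add, Complex.exp_pi_mul_I, Complex.exp_neg (2 * _ * _ * z)]
    ring
  rw [hxq, hprefactor, hmultiplier, qPoch_eq_one_sub_mul hq x,
    qPoch_eq_one_sub_mul hq (q / (x * q)), show q / (x * q) = x⁻¹ by field_simp,
    show x⁻¹ * q = q / x by ring]
  field_simp
  ring

lemma theta_add_lattice (hτ : 0 < τ.im) (l m : ℤ) (z : ℂ) :
    theta (z + (l * τ + m)) τ =
      cexp (π * I * (l + m) - π * I * l ^ 2 * τ - 2 * π * I * l * z) * theta z τ := by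
  have hone : ∀ z, theta (z + 1) τ = cexp (π * I + 0 * z) * theta z τ :=
    fun z => by rw [theta_add_one, zero_mul, add_zero, Complex.exp_pi_mul_I, neg_one_mul]
  have hm := apply_add_int_mul_of_apply_add (f := fun z => theta z τ) hone m (z + l * τ)
  have hl := apply_add_int_mul_of_apply_add (f := fun z => theta z τ) (theta_add_tau hτ) l z
  rw [← add_assoc, show z + l * τ + m = z + l * τ + m * 1 by ring, hm, hl, ← mul_assoc,
    ← Complex.exp_add]
  congr 2
  ring

end QuasiPeriodicity

section Sigma

variable {τ w : ℂ}

lemma sigmaW_add_lattice (hτ : 0 < τ.im) (t : ℂ) (l m : ℤ) :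
    sigmaW w (t + (l * τ + m)) τ = cexp (2 * π * I * w * l) * sigmaW w t τ := by
  have hmultiplier : cexp (π * I * ((-l : ℤ) + (-m : ℤ)) - π * I * ((-l : ℤ) : ℂ) ^ 2 * τ -
        2 * π * I * ((-l : ℤ) : ℂ) * (w - t)) =
      cexp (2 * π * I * w * l) *
        cexp (π * I * (l + m) - π * I * l ^ 2 * τ - 2 * π * I * l * t) := by
    rw [← Complex.exp_add, Complex.exp_eq_exp_iff_exists_int]
    exact ⟨-(l + m), by push_cast; ring⟩
  unfold sigmaW
  rw [show w - (t + (l * τ + m)) = w - t + (((-l : ℤ) : ℂ) * τ + ((-m : ℤ) : ℂ)) by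
      push_cast; ring,
    theta_add_lattice hτ, theta_add_lattice hτ, hmultiplier]
  field_simp

lemma differentiableOn_sigmaW (hτ : 0 < τ.im) (hw : w ∉ Lam τ) :
    DifferentiableOn ℂ (fun t => sigmaW w t τ) (Lam τ)ᶜ := by
  have hθ := differentiable_theta hτ
  exact DifferentiableOn.div (by fun_prop) (by fun_prop) fun t ht =>
    mul_ne_zero (theta_ne_zero hτ hw) (theta_ne_zero hτ ht)

lemma tendsto_mul_sigmaW_zero (hτ : 0 < τ.im) (hw : w ∉ Lam τ) :
    Tendsto (fun t => t * sigmaW w t τ) (𝓝[≠] 0) (𝓝 1) := by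
  have hnum : Tendsto (fun t => theta (w - t) τ * thetaD 0 τ / theta w τ) (𝓝[≠] 0)
      (𝓝 (theta w τ * thetaD 0 τ / theta w τ)) := by
    have hθ := (differentiable_theta hτ).continuous
    simpa using ((show Continuous fun t => theta (w - t) τ * thetaD 0 τ / theta w τ by
      fun_prop).tendsto 0).mono_left nhdsWithin_le_nhds
  have hlim := hnum.mul (tendsto_div_theta_zero hτ)
  rw [mul_div_cancel_left₀ _ (theta_ne_zero hτ hw), mul_inv_cancel₀ (thetaD_zero_ne_zero hτ)]
    at hlim
  refine hlim.congr fun t => ?_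
  unfold sigmaW
  ring

lemma tendsto_sub_mul_sigmaW_lattice (hτ : 0 < τ.im) (hw : w ∉ Lam τ) (l m : ℤ) :
    Tendsto (fun t => (t - (l * τ + m)) * sigmaW w t τ) (𝓝[≠] (l * τ + m))
      (𝓝 (cexp (2 * π * I * w * l))) := by
  have htranslate : Tendsto (fun t => t - (l * τ + m)) (𝓝[≠] (l * τ + m)) (𝓝[≠] 0) := by
    have := Filter.map_subRight_nhdsNE (c := (l * τ + m : ℂ)) (a := l * τ + m)
    rw [sub_self] at this
    exact this.le
  have hlim := ((tendsto_mul_sigmaW_zero hτ hw).const_mul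
    (cexp (2 * π * I * w * l))).comp htranslate
  rw [mul_one] at hlim
  refine hlim.congr fun t => ?_
  have hperiod := sigmaW_add_lattice (w := w) hτ (t - (l * τ + m)) l m
  rw [sub_add_cancel] at hperiod
  simp only [Function.comp_apply, hperiod]
  ring

end Sigma

/-- `t ↦ σ_w(t,τ)` is holomorphic on `ℂ ∖ Λ` and has a simple pole at each lattice point
`λ = lτ + m` with residue `e^{2πiwl}`; in particular the residue at `t = 0` is `1`. -/
theorem sigma_holomorphic_and_poles (τ : ℂ) (hτ : 0 < τ.im) (w : ℂ) (hw : w ∉ Lam τ) :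
    DifferentiableOn ℂ (fun t => sigmaW w t τ) (Lam τ)ᶜ ∧
    (∀ l m : ℤ, Filter.Tendsto (fun t => (t - ((l : ℂ) * τ + m)) * sigmaW w t τ)
      (𝓝[≠] ((l : ℂ) * τ + m)) (𝓝 (Complex.exp (2 * (Real.pi : ℂ) * Complex.I * w * l)))) ∧
    Filter.Tendsto (fun t => t * sigmaW w t τ) (𝓝[≠] (0 : ℂ)) (𝓝 (1 : ℂ)) :=
  ⟨differentiableOn_sigmaW hτ hw, tendsto_sub_mul_sigmaW_lattice hτ hw,
    tendsto_mul_sigmaW_zero hτ hw⟩
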